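/- Let θ, φ ∈ ℝ, let x ~ N(0,1), and given x let y be distributed as N(σ(θ-φ)x, σ(θ-φ)e^φ). Then the expected squared difference E[(x - y)²] equals σ(φ-θ)·(e^θ + σ(φ-θ)), where σ(a) = 1/(1+e^{-a}). -/

import Mathlib

open Real MeasureTheory

/-- Univariate normal density with mean `m` and variance `v`. -/
noncomputable def gaussianPDF (m v x : ℝ) : ℝ :=
  (Real.sqrt (2 * Real.pi * v))⁻¹ * Real.exp (-(x - m) ^ 2 / (2 * v))

/-- Sigmoid function. -/
noncomputable def sigmoid (a : ℝ) : ℝ := 1 / (1 + Real.exp (-a))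

/-!
Write `s = σ(θ - φ)`. By the bias–variance decomposition `E[(x - Y)²] = (x - E Y)² + Var Y`,
the inner integral is `(x - s x)² + s e^φ`. Averaging over `x ~ N(0,1)` gives
`(1 - s)² + s e^φ`, and `1 - σ(a) = σ(-a)`, `σ(a) e^{-a} = σ(-a)` turn this into
`σ(φ - θ) (e^θ + σ(φ - θ))`.
-/

open ProbabilityTheory hiding gaussianPDF

lemma sigmoid_eq_real_sigmoid : _root_.sigmoid = Real.sigmoid := by
  ext a
  rw [_root_.sigmoid, Real.sigmoid_def, one_div]

lemma one_sub_sigmoid_sq_add_sigmoid_mul_exp (θ φ : ℝ) :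
    (1 - Real.sigmoid (θ - φ)) ^ 2 + Real.sigmoid (θ - φ) * Real.exp φ =
      Real.sigmoid (φ - θ) * (Real.exp θ + Real.sigmoid (φ - θ)) := by
  have h_one_sub : 1 - Real.sigmoid (θ - φ) = Real.sigmoid (φ - θ) := by
    rw [← Real.sigmoid_neg, neg_sub]
  have h_mul_exp : Real.sigmoid (θ - φ) * Real.exp φ = Real.sigmoid (φ - θ) * Real.exp θ := by
    rw [← neg_sub θ φ, ← Real.sigmoid_mul_rexp_neg, mul_assoc, ← Real.exp_add]
    congr 2
    ring
  rw [h_one_sub, h_mul_exp]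
  ring

lemma integral_const_sub_sq {Ω : Type*} {mΩ : MeasurableSpace Ω} {μ : Measure Ω}
    [IsProbabilityMeasure μ] {X : Ω → ℝ} (hX : MemLp X 2 μ) (c : ℝ) :
    ∫ ω, (c - X ω) ^ 2 ∂μ = (c - μ[X]) ^ 2 + Var[X; μ] := by
  have h_mean : ∫ ω, (c - X ω) ∂μ = c - μ[X] := by
    rw [integral_sub (integrable_const c) (hX.integrable one_le_two), integral_const]
    simp
  have h_memLp : MemLp (fun ω ↦ c - X ω) 2 μ := (memLp_const c).sub hX
  have h_var := variance_eq_sub h_memLp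
  rw [variance_const_sub hX.aestronglyMeasurable, h_mean] at h_var
  simp only [Pi.pow_apply] at h_var
  linarith

lemma integral_const_sub_sq_gaussianReal (m : ℝ) (v : NNReal) (c : ℝ) :
    ∫ y, (c - y) ^ 2 ∂gaussianReal m v = (c - m) ^ 2 + v := by
  simpa [integral_id_gaussianReal, variance_id_gaussianReal] using
    integral_const_sub_sq (memLp_id_gaussianReal 2 (μ := m) (v := v)) c

lemma gaussianPDF_eq_gaussianPDFReal (m : ℝ) {v : ℝ} (hv : 0 ≤ v) :
    _root_.gaussianPDF m v = gaussianPDFReal m v.toNNReal := by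
  ext x
  rw [_root_.gaussianPDF, gaussianPDFReal, Real.coe_toNNReal v hv]

lemma integral_mul_gaussianPDF (m : ℝ) {v : ℝ} (hv : 0 < v) (f : ℝ → ℝ) :
    ∫ y, f y * _root_.gaussianPDF m v y = ∫ y, f y ∂gaussianReal m v.toNNReal := by
  rw [integral_gaussianReal_eq_integral_smul (by simpa using hv),
    gaussianPDF_eq_gaussianPDFReal m hv.le]
  simp only [smul_eq_mul, mul_comm]

lemma integral_sub_sq_mul_gaussianPDF (m : ℝ) {v : ℝ} (hv : 0 < v) (x : ℝ) :
    ∫ y, (x - y) ^ 2 * _root_.gaussianPDF m v y = (x - m) ^ 2 + v := by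
  rw [integral_mul_gaussianPDF m hv, integral_const_sub_sq_gaussianReal,
    Real.coe_toNNReal v hv.le]

lemma integral_gaussianPDF_mul_sq_add (m : ℝ) {v : ℝ} (hv : 0 < v) (a b : ℝ) :
    ∫ x, _root_.gaussianPDF m v x * (a * x ^ 2 + b) = a * (m ^ 2 + v) + b := by
  have h_int : Integrable (fun x : ℝ ↦ x ^ 2) (gaussianReal m v.toNNReal) :=
    (memLp_id_gaussianReal 2).integrable_sq
  have h_sq : ∫ x, x ^ 2 ∂gaussianReal m v.toNNReal = m ^ 2 + v := by
    simpa [Real.coe_toNNReal v hv.le] using integral_const_sub_sq_gaussianReal m v.toNNReal 0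
  simp_rw [mul_comm (_root_.gaussianPDF m v _)]
  rw [integral_mul_gaussianPDF m hv, integral_add (h_int.const_mul a) (integrable_const b),
    integral_const_mul, h_sq]
  simp

theorem forward_ct_cost_eq (θ φ : ℝ) :
    (∫ x : ℝ, gaussianPDF 0 1 x *
        ∫ y : ℝ, (x - y) ^ 2 *
          gaussianPDF (_root_.sigmoid (θ - φ) * x) (_root_.sigmoid (θ - φ) * Real.exp φ) y) =
      _root_.sigmoid (φ - θ) * (Real.exp θ + _root_.sigmoid (φ - θ)) := by
  simp only [sigmoid_eq_real_sigmoid]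
  set s := Real.sigmoid (θ - φ)
  have hv : 0 < s * Real.exp φ := mul_pos (Real.sigmoid_pos _) (Real.exp_pos φ)
  have h_inner : ∀ x : ℝ, ∫ y, (x - y) ^ 2 * _root_.gaussianPDF (s * x) (s * Real.exp φ) y =
      (1 - s) ^ 2 * x ^ 2 + s * Real.exp φ := by
    intro x
    rw [integral_sub_sq_mul_gaussianPDF _ hv]
    ring
  simp_rw [h_inner]
  rw [integral_gaussianPDF_mul_sq_add 0 one_pos, ← one_sub_sigmoid_sq_add_sigmoid_mul_exp]
  ring
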